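/- Let ρ ∈ ℝ with |ρ| < 1/2, let τ > 0 and x > 0. Then ₁F₁(1/2 + ρ + iτ; 1 + 2iτ; −x) = e^{−x/2} · [ 1 + Σ_{k=1}^∞ ( (x/2)^k / k! ) · ₂F₁(−k; iτ + ρ + 1/2; 1 + 2iτ; 2) ]. -/

import Mathlib

open MeasureTheory

/-- Complex Pochhammer symbol `(a)_m = a (a+1) ⋯ (a+m−1)`. -/
noncomputable def pochC (a : ℂ) (m : ℕ) : ℂ := ∏ j ∈ Finset.range m, (a + j)

/-- Confluent hypergeometric series `₁F₁(a; b; z) = Σ_{k≥0} (a)_k z^k / ((b)_k k!)`. -/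
noncomputable def oneF1 (a b z : ℂ) : ℂ :=
  ∑' k : ℕ, pochC a k * z ^ k / (pochC b k * (Nat.factorial k : ℂ))

/-- Terminating hypergeometric sum
`₂F₁(−k; a; c; 2) = Σ_{m=0}^k (−k)_m (a)_m 2^m / ((c)_m m!)`. -/
noncomputable def twoF1neg (k : ℕ) (a c : ℂ) : ℂ :=
  ∑ m ∈ Finset.range (k + 1),
    pochC (-(k : ℂ)) m * pochC a m * 2 ^ m / (pochC c m * (Nat.factorial m : ℂ))

lemma pochC_zero (a : ℂ) : pochC a 0 = 1 := by simp [pochC]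

lemma pochC_succ (a : ℂ) (n : ℕ) : pochC a (n+1) = pochC a n * (a + n) := by
  simp [pochC, Finset.prod_range_succ]

lemma pochC_neg_nat (n j : ℕ) (hj : j ≤ n) :
    ((n - j).factorial : ℂ) * pochC (-(n:ℂ)) j = (-1)^j * (n.factorial : ℂ) := by
  induction j with
  | zero => simp [pochC]
  | succ j ih =>
    have h1 : j ≤ n := by omega
    have ih' := ih h1
    rw [pochC_succ]
    have hm : n - j = (n - (j+1)) + 1 := by omega
    have hfac : ((n - j).factorial : ℂ) = ((n - j : ℕ) : ℂ) * ((n - (j+1)).factorial : ℂ) := by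
      rw [hm, Nat.factorial_succ]
      push_cast
      ring
    have hcast : ((n - j : ℕ) : ℂ) = (n : ℂ) - (j : ℂ) := by
      push_cast [Nat.cast_sub h1]; ring
    have hnz0 : (n - j : ℕ) ≠ 0 := by omega
    have hnz : ((n : ℂ) - (j : ℂ)) ≠ 0 := by
      rw [← hcast]; exact_mod_cast hnz0
    have : ((n - (j+1)).factorial : ℂ) * (pochC (-(n:ℂ)) j * (-(n:ℂ) + j))
        = -(((n - j).factorial : ℂ) * pochC (-(n:ℂ)) j) := by
      rw [hfac, hcast]; ring
    rw [this, ih']; ring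

lemma term_eq' (a b : ℂ) (x : ℂ) (n j : ℕ) (hj : j ≤ n) (hbj : pochC b j ≠ 0) :
    (x/2)^(n-j)/(((n-j).factorial : ℂ)) * (pochC a j * (-x)^j / (pochC b j * (j.factorial : ℂ)))
      = (x/2)^n/((n.factorial : ℂ)) *
        (pochC (-(n:ℂ)) j * pochC a j * 2^j / (pochC b j * (j.factorial : ℂ))) := by
  have hpoch := pochC_neg_nat n j hj
  have hneg : (-x)^j = (x/2)^j * (-2:ℂ)^j := by rw [← mul_pow]; ring_nf
  have hpow : (x/2)^(n-j) * (x/2)^j = (x/2)^n := pow_sub_mul_pow _ hj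
  have f1 : (((n-j).factorial : ℕ) : ℂ) ≠ 0 := Nat.cast_ne_zero.mpr (Nat.factorial_ne_zero _)
  have f2 : ((n.factorial : ℕ) : ℂ) ≠ 0 := Nat.cast_ne_zero.mpr (Nat.factorial_ne_zero _)
  have f3 : ((j.factorial : ℕ) : ℂ) ≠ 0 := Nat.cast_ne_zero.mpr (Nat.factorial_ne_zero _)
  have hp : pochC (-(n:ℂ)) j = (-1)^j * (n.factorial : ℂ) / ((n-j).factorial : ℂ) := by
    rw [eq_div_iff f1]
    linear_combination hpoch
  rw [hp, hneg]
  have hx2 : x^(n-j)*x^j = x^n := pow_sub_mul_pow x hj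
  have h22 : (2:ℂ)^(n-j)*2^j = 2^n := pow_sub_mul_pow 2 hj
  have hm2 : (-2:ℂ)^j = (-1)^j*2^j := by rw [neg_pow]
  field_simp
  rw [hm2]
  rw [← hpow]; ring


theorem oneF1_expansion (ρ : ℝ) (hρ : |ρ| < 1/2) (τ x : ℝ) (hτ : 0 < τ) (hx : 0 < x) :
    oneF1 ((1:ℂ)/2 + ρ + Complex.I * τ) (1 + 2 * Complex.I * τ) (-(x : ℂ)) =
      Complex.exp (-(x : ℂ)/2) *
        (1 + ∑' k : ℕ, ((x : ℂ)/2) ^ (k + 1) / (Nat.factorial (k + 1) : ℂ) *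
          twoF1neg (k + 1) (Complex.I * τ + ρ + 1/2) (1 + 2 * Complex.I * τ)) := by
  have ha : (Complex.I * (τ:ℂ) + (ρ:ℂ) + 1/2) = ((1:ℂ)/2 + (ρ:ℂ) + Complex.I * τ) := by ring
  rw [ha]
  set a : ℂ := (1:ℂ)/2 + (ρ:ℂ) + Complex.I * τ with ha_def
  set b : ℂ := (1:ℂ) + 2 * Complex.I * τ with hb_def
  -- b + m ≠ 0
  have hbU : ∀ m : ℕ, b + (m:ℂ) ≠ 0 := by
    intro m h
    have h2 := congrArg Complex.re h
    simp [hb_def] at h2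
    have : (0:ℝ) ≤ (m:ℝ) := m.cast_nonneg
    linarith
  have hbp : ∀ m : ℕ, pochC b m ≠ 0 := by
    intro m
    exact Finset.prod_ne_zero_iff.mpr (fun j _ => hbU j)
  -- norm lower bound for b + m
  have hre : ∀ m : ℕ, (1:ℝ) + m ≤ ‖b + (m:ℂ)‖ := by
    intro m
    have h1 : (b + (m:ℂ)).re = 1 + m := by simp [hb_def]
    calc (1:ℝ) + m = (b + (m:ℂ)).re := h1.symm
      _ ≤ ‖b + (m:ℂ)‖ := Complex.re_le_norm _
      _ = ‖b + (m:ℂ)‖ := rfl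
  set M : ℝ := max ‖a‖ 1 with hM_def
  have hM1 : (1:ℝ) ≤ M := le_max_right _ _
  have hMa : ‖a‖ ≤ M := le_max_left _ _
  have hM0 : (0:ℝ) ≤ M := by linarith
  have hpoch_bound : ∀ m : ℕ, ‖pochC a m‖ ≤ M^m * ‖pochC b m‖ := by
    intro m
    induction m with
    | zero => simp [pochC_zero]
    | succ m ih =>
      rw [pochC_succ, pochC_succ, norm_mul, norm_mul, pow_succ]
      have h1 : ‖a + (m:ℂ)‖ ≤ ‖a‖ + m := by
        calc ‖a + (m:ℂ)‖ ≤ ‖a‖ + ‖(m:ℂ)‖ := norm_add_le _ _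
          _ = ‖a‖ + m := by rw [Complex.norm_natCast]
      have h2 : ‖a‖ + m ≤ M * (1 + m) := by nlinarith [show (0:ℝ) ≤ (m:ℝ) from m.cast_nonneg]
      have h3 : M * (1 + m) ≤ M * ‖b + (m:ℂ)‖ :=
        mul_le_mul_of_nonneg_left (hre m) hM0
      calc ‖pochC a m‖ * ‖a + (m:ℂ)‖ ≤ (M^m * ‖pochC b m‖) * (M * ‖b + (m:ℂ)‖) :=
            mul_le_mul ih (h1.trans (h2.trans h3)) (norm_nonneg _) (by positivity)
        _ = M^m * M * (‖pochC b m‖ * ‖b + (m:ℂ)‖) := by ring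
  -- summability of the 1F1 series (in norm)
  have fsum : Summable (fun n => ‖pochC a n * (-(x:ℂ))^n / (pochC b n * (n.factorial : ℂ))‖) := by
    apply Summable.of_nonneg_of_le (fun n => norm_nonneg _) ?_
      (Real.summable_pow_div_factorial (M*x))
    intro n
    have hPb : (0:ℝ) < ‖pochC b n‖ := norm_pos_iff.mpr (hbp n)
    have hfa : (0:ℝ) < (n.factorial : ℝ) := by exact_mod_cast n.factorial_pos
    rw [norm_div, norm_mul, norm_mul, norm_pow, norm_neg, Complex.norm_real, Complex.norm_natCast]
    rw [Real.norm_eq_abs, abs_of_pos hx, mul_pow]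
    rw [div_le_div_iff₀ (by positivity) hfa]
    have hb1 : ‖pochC a n‖ * (x^n * (n.factorial:ℝ)) ≤ (M^n * ‖pochC b n‖) * (x^n * (n.factorial:ℝ)) :=
      mul_le_mul_of_nonneg_right (hpoch_bound n) (by positivity)
    nlinarith [hb1]
  -- summability of exp series (in norm)
  have gnorm : ∀ n : ℕ, ‖((x:ℂ)/2)^n / (n.factorial:ℂ)‖ = (x/2)^n / (n.factorial:ℝ) := by
    intro n
    rw [norm_div, norm_pow, Complex.norm_natCast]
    congr 1
    rw [show ((x:ℂ)/2) = ((x/2 : ℝ) : ℂ) by push_cast; ring, Complex.norm_real,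
      Real.norm_eq_abs, abs_of_pos (by linarith)]
  have gsum : Summable (fun n => ‖((x:ℂ)/2)^n / (n.factorial:ℂ)‖) := by
    simp only [gnorm]
    exact Real.summable_pow_div_factorial (x/2)
  -- Cauchy product
  have key := tsum_mul_tsum_eq_tsum_sum_range_of_summable_norm gsum fsum
  have hexp : Complex.exp ((x:ℂ)/2) = ∑' n : ℕ, ((x:ℂ)/2)^n / (n.factorial:ℂ) := by
    rw [Complex.exp_eq_exp_ℂ, NormedSpace.exp_eq_tsum_div]
  -- per-n identity
  have hper : ∀ n : ℕ, (∑ k ∈ Finset.range (n+1),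
      ((x:ℂ)/2)^k / (k.factorial:ℂ) *
        (pochC a (n-k) * (-(x:ℂ))^(n-k) / (pochC b (n-k) * ((n-k).factorial : ℂ))))
      = ((x:ℂ)/2)^n / (n.factorial:ℂ) * twoF1neg n a b := by
    intro n
    rw [← Finset.sum_range_reflect]
    rw [twoF1neg, Finset.mul_sum]
    apply Finset.sum_congr rfl
    intro j hj
    have hjn : j ≤ n := by
      simp only [Finset.mem_range] at hj; omega
    have h1 : n + 1 - 1 - j = n - j := by omega
    have h2 : n - (n - j) = j := Nat.sub_sub_self hjn
    rw [h1, h2]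
    exact term_eq' a b x n j hjn (hbp j)
  have hE : Complex.exp ((x:ℂ)/2) * oneF1 a b (-(x:ℂ))
      = ∑' n : ℕ, ((x:ℂ)/2)^n / (n.factorial:ℂ) * twoF1neg n a b := by
    rw [hexp, oneF1, key]
    exact tsum_congr hper
  have hsum : Summable (fun n => ((x:ℂ)/2)^n / (n.factorial:ℂ) * twoF1neg n a b) := by
    have h := (summable_norm_sum_mul_range_of_summable_norm gsum fsum).of_norm
    exact h.congr hper
  have ht0 : ((x:ℂ)/2)^0 / ((0:ℕ).factorial:ℂ) * twoF1neg 0 a b = 1 := by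
    simp [twoF1neg, pochC]
  have hinv : Complex.exp (-(x:ℂ)/2) * Complex.exp ((x:ℂ)/2) = 1 := by
    rw [← Complex.exp_add]
    norm_num
    rw [show (-(x:ℂ)/2 + (x:ℂ)/2) = 0 by ring, Complex.exp_zero]
  calc oneF1 a b (-(x:ℂ))
      = Complex.exp (-(x:ℂ)/2) * (Complex.exp ((x:ℂ)/2) * oneF1 a b (-(x:ℂ))) := by
        rw [← mul_assoc, hinv, one_mul]
    _ = Complex.exp (-(x:ℂ)/2) * ∑' n : ℕ, ((x:ℂ)/2)^n / (n.factorial:ℂ) * twoF1neg n a b := by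
        rw [hE]
    _ = Complex.exp (-(x:ℂ)/2) * (1 + ∑' k : ℕ, ((x:ℂ)/2)^(k+1) / ((k+1).factorial:ℂ) * twoF1neg (k+1) a b) := by
        rw [hsum.tsum_eq_zero_add, ht0]
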